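/- Let 𝓛 be a nonempty convex subset of a Coxeter group W and let τ_i be the corresponding noninvertible Bender–Knuth toggle. Then τ_i restricts to an involution of 𝓛: for all u ∈ 𝓛, τ_i(u) ∈ 𝓛 and τ_i(τ_i(u)) = u. -/

import Mathlib

open scoped Classical

noncomputable section

namespace BKBilliards

variable {I : Type*} [Fintype I] [DecidableEq I]
variable {M : CoxeterMatrix I} {W : Type*} [Group W]

/-- The simple root indexed by `i`, i.e. the `i`-th standard basis vector of `ℝ^I`. -/
def sroot (i : I) : I → ℝ := Pi.single i 1

/-- The data `(ρ, B)` constitutes the standard geometric representation of the Coxeter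
system `cs`, together with its induced symmetric bilinear form (with `μ = 1` on all
pairs whose Coxeter matrix entry is `∞`, encoded as `0`). -/
structure IsGeometric (cs : CoxeterSystem M W) (ρ : Representation ℝ W (I → ℝ))
    (B : LinearMap.BilinForm ℝ (I → ℝ)) : Prop where
  /-- `B(αᵢ, αᵢ') = -cos (π / m i i')` when `m i i' ≠ ∞`. -/
  form_apply_of_ne_zero : ∀ i i' : I, M i i' ≠ 0 →
    B (sroot i) (sroot i') = - Real.cos (Real.pi / (M i i' : ℝ))
  /-- `B(αᵢ, αᵢ') = -1` when `m i i' = ∞` (encoded as `0`). -/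
  form_apply_of_eq_zero : ∀ i i' : I, M i i' = 0 → B (sroot i) (sroot i') = -1
  /-- Each simple reflection acts by the reflection formula. -/
  simple_apply : ∀ (i : I) (v : I → ℝ), ρ (cs.simple i) v = v - (2 * B v (sroot i)) • sroot i

variable (ρ : Representation ℝ W (I → ℝ))

/-- The root system `Φ = {w αᵢ : w ∈ W, i ∈ I}`. -/
def Phi : Set (I → ℝ) := {v | ∃ (w : W) (i : I), v = ρ w (sroot i)}

/-- The half-space `H_β⁺ = {w ∈ W : w β ∈ Φ⁺}`: for a root `β`, membership amounts to
`w β` being a nonnegative combination of the simple roots. -/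
def Hplus (β : I → ℝ) : Set W := {w : W | 0 ≤ ρ w β}

/-- `R(𝓛) = {β ∈ Φ : 𝓛 ⊆ H_β⁺}`. -/
def RL (L : Set W) : Set (I → ℝ) := {β | β ∈ Phi ρ ∧ ∀ w ∈ L, w ∈ Hplus ρ β}

/-- `𝓛` is convex if it equals the intersection of all half-spaces containing it. -/
def IsConvex (L : Set W) : Prop := ∀ u : W, (∀ β ∈ RL ρ L, u ∈ Hplus ρ β) → u ∈ L

/-- The set of separators of `u`: `Sep(u) = {β ∈ R(𝓛) : u β ∈ Φ⁻}`. -/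
def Sep (L : Set W) (u : W) : Set (I → ℝ) := {β | β ∈ RL ρ L ∧ ρ u β ≤ 0}

variable (cs : CoxeterSystem M W)

/-- The noninvertible Bender–Knuth toggle `τᵢ` associated to the convex set `𝓛`. -/
def toggle (L : Set W) (i : I) (u : W) : W :=
  if ρ u⁻¹ (sroot i) ∈ RL ρ L then u else cs.simple i * u

/-- For a word `𝗐 = i_M ⋯ i_1` (a list whose head is `i_M`), the composition
`τ_𝗐 = τ_{i_M} ⋯ τ_{i_1}`. -/
def toggleWord (L : Set W) (l : List I) (u : W) : W :=
  l.foldr (fun i v => toggle ρ cs L i v) u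

/-- `β` dominates `β'` if `H_β⁺ ⊇ H_{β'}⁺`. -/
def Dominates (β β' : I → ℝ) : Prop := Hplus ρ β' ⊆ Hplus ρ β

/-- A small root: a positive root dominating no positive root other than itself. -/
def IsSmall (β : I → ℝ) : Prop :=
  β ∈ Phi ρ ∧ 0 ≤ β ∧ ∀ β', β' ∈ Phi ρ → 0 ≤ β' → Dominates ρ β β' → β' = β

/-- `β` is a transmitting root of the stratum `Str(R)`:
`β ∈ R(𝓛)` and `β = -w⁻¹ αᵢ` for some `w` with `Sep(w) = R` and some `i ∈ I`. -/
def IsTransmitting (L : Set W) (R : Set (I → ℝ)) (β : I → ℝ) : Prop :=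
  β ∈ RL ρ L ∧ ∃ (w : W) (i : I), Sep ρ L w = R ∧ β = - ρ w⁻¹ (sroot i)

end BKBilliards

open BKBilliards

set_option linter.unusedSectionVars false

namespace BKAux

open BKBilliards CoxeterSystem

variable {I : Type*} [Fintype I] [DecidableEq I]
variable {M : CoxeterMatrix I} {W : Type*} [Group W]
variable {cs : CoxeterSystem M W} {ρ : Representation ℝ W (I → ℝ)}
variable {B : LinearMap.BilinForm ℝ (I → ℝ)}

lemma sroot_nonneg (i : I) : (0 : I → ℝ) ≤ sroot i := by
  intro k
  simp only [sroot, Pi.zero_apply, Pi.single_apply]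
  split <;> norm_num

lemma sroot_apply_self (i : I) : sroot i i = 1 := by simp [sroot]

lemma eq_sum_sroot (v : I → ℝ) : v = ∑ k, v k • sroot k := by
  funext l
  rw [Finset.sum_apply]
  simp [sroot, Pi.single_apply]

lemma B_self (hgeom : IsGeometric cs ρ B) (i : I) : B (sroot i) (sroot i) = 1 := by
  have h := hgeom.form_apply_of_ne_zero i i (by simp)
  rw [M.diagonal i] at h
  simp [Real.cos_pi] at h
  linarith

lemma B_single_symm (hgeom : IsGeometric cs ρ B) (k l : I) :
    B (sroot k) (sroot l) = B (sroot l) (sroot k) := by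
  have hsym : M k l = M l k := M.symmetric k l
  by_cases h : M k l = 0
  · rw [hgeom.form_apply_of_eq_zero k l h, hgeom.form_apply_of_eq_zero l k (hsym ▸ h)]
  · rw [hgeom.form_apply_of_ne_zero k l h, hgeom.form_apply_of_ne_zero l k (hsym ▸ h), hsym]

lemma B_symm (hgeom : IsGeometric cs ρ B) (v w : I → ℝ) : B v w = B w v := by
  conv_lhs => rw [eq_sum_sroot v, eq_sum_sroot w]
  conv_rhs => rw [eq_sum_sroot v, eq_sum_sroot w]
  simp only [map_sum, map_smul, LinearMap.sum_apply, LinearMap.smul_apply, smul_eq_mul,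
    Finset.mul_sum]
  rw [Finset.sum_comm]
  exact Finset.sum_congr rfl fun k _ => Finset.sum_congr rfl fun l _ => by
    rw [B_single_symm hgeom]; ring

lemma B_inv_simple (hgeom : IsGeometric cs ρ B) (k : I) (v v' : I → ℝ) :
    B (ρ (cs.simple k) v) (ρ (cs.simple k) v') = B v v' := by
  rw [hgeom.simple_apply, hgeom.simple_apply]
  simp only [map_sub, map_smul, LinearMap.sub_apply, LinearMap.smul_apply, smul_eq_mul]
  rw [B_self hgeom, B_symm hgeom (sroot k) v']
  ring

lemma B_inv (hgeom : IsGeometric cs ρ B) (w : W) (v v' : I → ℝ) :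
    B (ρ w v) (ρ w v') = B v v' := by
  induction w using cs.simple_induction_left with
  | one => simp
  | mul_simple_left u k ih =>
      simp only [map_mul, Module.End.mul_apply]
      rw [B_inv_simple hgeom, ih]


/-! ### The rank-2 recurrence -/

/-- Coordinates of `ρ(d_t)(αᵢ)` in the basis `(αᵢ, αⱼ)`, where `d_t` is the product of the
alternating word in `i, j` of length `t` ending (on the right) with `j`. -/
def xs (c : ℝ) : ℕ → ℝ × ℝ
  | 0 => (1, 0)
  | (t+1) =>
      if Even t then ((xs c t).1, 2 * c * (xs c t).1 - (xs c t).2)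
      else (2 * c * (xs c t).2 - (xs c t).1, (xs c t).2)

lemma xs_succ (c : ℝ) (t : ℕ) :
    xs c (t+1) = if Even t then ((xs c t).1, 2 * c * (xs c t).1 - (xs c t).2)
      else (2 * c * (xs c t).2 - (xs c t).1, (xs c t).2) := rfl

lemma sin_rec (θ A : ℝ) : Real.sin (A + θ) = 2 * Real.cos θ * Real.sin A - Real.sin (A - θ) := by
  rw [Real.sin_add, Real.sin_sub]; ring

lemma xs_one_closed (t : ℕ) :
    (Even t → xs 1 t = ((t : ℝ) + 1, (t : ℝ))) ∧
      (¬ Even t → xs 1 t = ((t : ℝ), (t : ℝ) + 1)) := by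
  induction t with
  | zero => simp [xs]
  | succ t ih =>
      rcases Nat.even_or_odd t with he | ho
      · have h1 := ih.1 he
        have h2 : ¬ Even (t + 1) := by simp [Nat.even_add_one, he]
        refine ⟨fun h => absurd h h2, fun _ => ?_⟩
        rw [xs_succ, if_pos he, h1]
        push_cast
        norm_num
        ring
      · have ho' : ¬ Even t := Nat.not_even_iff_odd.mpr ho
        have h1 := ih.2 ho'
        have h2 : Even (t + 1) := Nat.even_add_one.mpr ho'
        refine ⟨fun _ => ?_, fun h => absurd h2 h⟩
        rw [xs_succ, if_neg ho', h1]
        push_cast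
        norm_num
        ring

lemma xs_sin_closed {m : ℕ} (hm : 2 ≤ m) (t : ℕ) :
    (Even t → xs (Real.cos (Real.pi / m)) t =
      (Real.sin (((t : ℝ) + 1) * (Real.pi / m)) / Real.sin (Real.pi / m),
       Real.sin ((t : ℝ) * (Real.pi / m)) / Real.sin (Real.pi / m))) ∧
    (¬ Even t → xs (Real.cos (Real.pi / m)) t =
      (Real.sin ((t : ℝ) * (Real.pi / m)) / Real.sin (Real.pi / m),
       Real.sin (((t : ℝ) + 1) * (Real.pi / m)) / Real.sin (Real.pi / m))) := by
  set θ := Real.pi / m with hθdef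
  have hm0 : (0 : ℝ) < m := by positivity
  have hθpos : 0 < θ := by positivity
  have hθlt : θ < Real.pi := by
    have h2m : (2:ℝ) ≤ m := by exact_mod_cast hm
    rw [hθdef, div_lt_iff₀ hm0]
    nlinarith [Real.pi_pos]
  have hs : Real.sin θ ≠ 0 := ne_of_gt (Real.sin_pos_of_pos_of_lt_pi hθpos hθlt)
  induction t with
  | zero =>
      constructor
      · intro _
        simp [xs, hs]
      · intro h; exact absurd (by norm_num) h
  | succ t ih =>
      have key : ∀ A : ℝ, 2 * Real.cos θ * Real.sin ((A + 1) * θ) - Real.sin (A * θ)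
          = Real.sin ((A + 2) * θ) := by
        intro A
        have e1 : (A + 2) * θ = ((A + 1) * θ) + θ := by ring
        have e2 : A * θ = ((A + 1) * θ) - θ := by ring
        rw [e1, sin_rec, e2]
      rcases Nat.even_or_odd t with he | ho
      · have h1 := ih.1 he
        have h2 : ¬ Even (t + 1) := by simp [Nat.even_add_one, he]
        refine ⟨fun h => absurd h h2, fun _ => ?_⟩
        rw [xs_succ, if_pos he, h1]
        have : 2 * Real.cos θ * (Real.sin (((t:ℝ) + 1) * θ) / Real.sin θ)
            - Real.sin ((t:ℝ) * θ) / Real.sin θ = Real.sin (((t:ℝ) + 2) * θ) / Real.sin θ := by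
          rw [← key (t : ℝ)]
          field_simp
        push_cast
        rw [this]
        simp only [Prod.mk.injEq]
        exact ⟨trivial, by ring_nf⟩
      · have ho' : ¬ Even t := Nat.not_even_iff_odd.mpr ho
        have h1 := ih.2 ho'
        have h2 : Even (t + 1) := Nat.even_add_one.mpr ho'
        refine ⟨fun _ => ?_, fun h => absurd h2 h⟩
        rw [xs_succ, if_neg ho', h1]
        have : 2 * Real.cos θ * (Real.sin (((t:ℝ) + 1) * θ) / Real.sin θ)
            - Real.sin ((t:ℝ) * θ) / Real.sin θ = Real.sin (((t:ℝ) + 2) * θ) / Real.sin θ := by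
          rw [← key (t : ℝ)]
          field_simp
        push_cast
        rw [this]
        simp only [Prod.mk.injEq]
        exact ⟨by ring_nf, trivial⟩

/-- The off-diagonal cosine value. -/
def cVal (M : CoxeterMatrix I) (i j : I) : ℝ :=
  if M i j = 0 then 1 else Real.cos (Real.pi / (M i j : ℝ))

lemma xs_nonneg {i j : I} (hij : i ≠ j) (t : ℕ) (ht : M i j = 0 ∨ t < M i j) :
    0 ≤ (xs (cVal M i j) t).1 ∧ 0 ≤ (xs (cVal M i j) t).2 := by
  by_cases h0 : M i j = 0
  · rw [cVal, if_pos h0]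
    rcases Nat.even_or_odd t with he | ho
    · rw [(xs_one_closed t).1 he]
      constructor <;> positivity
    · rw [(xs_one_closed t).2 (Nat.not_even_iff_odd.mpr ho)]
      constructor <;> positivity
  · have hm2 : 2 ≤ M i j := by
      have := M.off_diagonal i j hij
      omega
    have htm : t < M i j := ht.resolve_left h0
    rw [cVal, if_neg h0]
    set m := M i j with hm
    set θ := Real.pi / (m : ℝ) with hθ
    have hmR : (0:ℝ) < m := by positivity
    have hθpos : 0 < θ := by positivity
    have hθlt : θ < Real.pi := by
      have h2m : (2:ℝ) ≤ m := by exact_mod_cast hm2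
      rw [hθ, div_lt_iff₀ hmR]
      nlinarith [Real.pi_pos]
    have hsinpos : 0 < Real.sin θ := Real.sin_pos_of_pos_of_lt_pi hθpos hθlt
    have key : ∀ a : ℝ, 0 ≤ a → a ≤ (m : ℝ) → 0 ≤ Real.sin (a * θ) := by
      intro a ha ham
      apply Real.sin_nonneg_of_nonneg_of_le_pi
      · positivity
      · rw [hθ, show a * (Real.pi / m) = a * Real.pi / m by ring, div_le_iff₀ hmR]
        nlinarith [Real.pi_pos]
    have h1 : 0 ≤ Real.sin ((t : ℝ) * θ) := key t (by positivity) (by exact_mod_cast htm.le)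
    have h2 : 0 ≤ Real.sin (((t : ℝ) + 1) * θ) := by
      apply key
      · positivity
      · exact_mod_cast (by omega : t + 1 ≤ m)
    rcases Nat.even_or_odd t with he | ho
    · rw [(xs_sin_closed hm2 t).1 he]
      exact ⟨div_nonneg h2 hsinpos.le, div_nonneg h1 hsinpos.le⟩
    · rw [(xs_sin_closed hm2 t).2 (Nat.not_even_iff_odd.mpr ho)]
      exact ⟨div_nonneg h1 hsinpos.le, div_nonneg h2 hsinpos.le⟩

lemma B_sroot_ij (hgeom : IsGeometric cs ρ B) {i j : I} (hij : i ≠ j) :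
    B (sroot i) (sroot j) = - cVal M i j := by
  by_cases h0 : M i j = 0
  · rw [hgeom.form_apply_of_eq_zero i j h0, cVal, if_pos h0]
  · rw [hgeom.form_apply_of_ne_zero i j h0, cVal, if_neg h0]

lemma B_sroot_ji (hgeom : IsGeometric cs ρ B) {i j : I} (hij : i ≠ j) :
    B (sroot j) (sroot i) = - cVal M i j := by
  rw [B_single_symm hgeom, B_sroot_ij hgeom hij]

lemma dvec (hgeom : IsGeometric cs ρ B) {i j : I} (hij : i ≠ j) (t : ℕ) :
    ρ (cs.wordProd (alternatingWord i j t)) (sroot i)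
      = (xs (cVal M i j) t).1 • sroot i + (xs (cVal M i j) t).2 • sroot j := by
  induction t with
  | zero =>
      simp only [alternatingWord, wordProd_nil, map_one, Module.End.one_apply, xs]
      rw [one_smul, zero_smul, add_zero]
  | succ t ih =>
      rw [alternatingWord_succ', wordProd_cons, map_mul, Module.End.mul_apply, ih, xs_succ]
      set x := (xs (cVal M i j) t).1
      set y := (xs (cVal M i j) t).2
      rcases Nat.even_or_odd t with he | ho
      · rw [if_pos he, if_pos he, hgeom.simple_apply]
        have hB : B (x • sroot i + y • sroot j) (sroot j) = - cVal M i j * x + y := by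
          simp only [map_add, map_smul, LinearMap.add_apply, LinearMap.smul_apply, smul_eq_mul]
          rw [B_sroot_ij hgeom hij, B_self hgeom]
          ring
        rw [hB]
        module
      · have ho' : ¬ Even t := Nat.not_even_iff_odd.mpr ho
        rw [if_neg ho', if_neg ho', hgeom.simple_apply]
        have hB : B (x • sroot i + y • sroot j) (sroot i) = x + - cVal M i j * y := by
          simp only [map_add, map_smul, LinearMap.add_apply, LinearMap.smul_apply, smul_eq_mul]
          rw [B_sroot_ji hgeom hij, B_self hgeom]
          ring
        rw [hB]
        module

/-! ### Every positive-length witness: root sign dichotomy -/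

lemma altWord_succ_prod (i j : I) (t : ℕ) :
    cs.wordProd (alternatingWord i j (t+1))
      = cs.simple (if Even t then j else i) * cs.wordProd (alternatingWord i j t) := by
  rw [alternatingWord_succ', wordProd_cons]

theorem rho_simple_nonneg (hgeom : IsGeometric cs ρ B) :
    ∀ (w : W) (i : I), ¬ cs.IsRightDescent w i → 0 ≤ ρ w (sroot i) := by
  suffices H : ∀ (n : ℕ) (w : W), cs.length w ≤ n →
      ∀ i, ¬ cs.IsRightDescent w i → 0 ≤ ρ w (sroot i) by
    exact fun w i h => H (cs.length w) w le_rfl i h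
  intro n
  induction n with
  | zero =>
      intro w hw i _
      have hw1 : w = 1 := cs.length_eq_zero_iff.mp (Nat.le_zero.mp hw)
      subst hw1
      simpa using sroot_nonneg i
  | succ n ihn =>
      intro w hw i hdes
      by_cases hw1 : w = 1
      · subst hw1; simpa using sroot_nonneg i
      obtain ⟨j, hj⟩ := cs.exists_rightDescent_of_ne_one hw1
      have hij : i ≠ j := fun h => hdes (h ▸ hj)
      have hlw1 : 1 ≤ cs.length w := by
        by_contra h
        push_neg at h
        exact hw1 (cs.length_eq_zero_iff.mp (by omega))
      set Q : ℕ → Prop := fun t => ∃ v : W, w = v * cs.wordProd (alternatingWord i j t)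
          ∧ cs.length w = cs.length v + t with hQdef
      have hQ1 : Q 1 := by
        refine ⟨w * cs.simple j, ?_, ?_⟩
        · have h1 : cs.wordProd (alternatingWord i j 1) = cs.simple j := by
            show cs.wordProd [j] = cs.simple j
            rw [wordProd_cons, wordProd_nil, mul_one]
          rw [h1, cs.simple_mul_simple_cancel_right]
        · have := cs.isRightDescent_iff.mp hj
          omega
      have hQbound : ∀ t, Q t → t ≤ cs.length w := by
        rintro t ⟨v, _, hv⟩
        omega
      set T := Nat.findGreatest Q (cs.length w) with hTdef
      have hT1 : 1 ≤ T := Nat.le_findGreatest hlw1 hQ1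
      have hQT : Q T := Nat.findGreatest_spec hlw1 hQ1
      have hQT1 : ¬ Q (T + 1) := fun hq =>
        Nat.findGreatest_is_greatest (Nat.lt_succ_self T) (hQbound _ hq) hq
      obtain ⟨v, hwv, hlen⟩ := hQT
      obtain ⟨T', hTT⟩ : ∃ T', T = T' + 1 := ⟨T - 1, by omega⟩
      rw [hTT] at hwv hlen hQT1
      set k1 := (if Even (T' + 1) then j else i) with hk1
      set k0 := (if Even T' then j else i) with hk0
      have ha1 : ¬ cs.IsRightDescent v k1 := by
        intro hd
        apply hQT1
        refine ⟨v * cs.simple k1, ?_, ?_⟩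
        · rw [altWord_succ_prod, ← hk1, mul_assoc, cs.simple_mul_simple_cancel_left, hwv]
        · have := cs.isRightDescent_iff.mp hd
          omega
      have ha0 : ¬ cs.IsRightDescent v k0 := by
        intro hd
        have hstep : cs.wordProd (alternatingWord i j (T' + 1))
            = cs.simple k0 * cs.wordProd (alternatingWord i j T') := by
          rw [altWord_succ_prod, ← hk0]
        have hw2 : w = (v * cs.simple k0) * cs.wordProd (alternatingWord i j T') := by
          rw [hwv, hstep, mul_assoc]
        have h1 : cs.length (v * cs.simple k0) + 1 = cs.length v := cs.isRightDescent_iff.mp hd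
        have h2 : cs.length w ≤ cs.length (v * cs.simple k0)
            + cs.length (cs.wordProd (alternatingWord i j T')) := by
          rw [hw2]; exact cs.length_mul_le _ _
        have h3 : cs.length (cs.wordProd (alternatingWord i j T')) ≤ T' := by
          have := cs.length_wordProd_le (alternatingWord i j T')
          rwa [length_alternatingWord] at this
        omega
      have hdvij : ¬ cs.IsRightDescent v i ∧ ¬ cs.IsRightDescent v j := by
        rcases Nat.even_or_odd T' with he | ho
        · have e1 : k0 = j := by rw [hk0, if_pos he]
          have e2 : k1 = i := by
            rw [hk1, if_neg (by simp [Nat.even_add_one, he])]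
          exact ⟨e2 ▸ ha1, e1 ▸ ha0⟩
        · have ho' : ¬ Even T' := Nat.not_even_iff_odd.mpr ho
          have e1 : k0 = i := by rw [hk0, if_neg ho']
          have e2 : k1 = j := by
            rw [hk1, if_pos (Nat.even_add_one.mpr ho')]
          exact ⟨e1 ▸ ha0, e2 ▸ ha1⟩
      have hci : M i j = 0 ∨ T' + 1 < M i j := by
        by_cases h0 : M i j = 0
        · exact Or.inl h0
        right
        have hco : cs.wordProd (alternatingWord j i (T' + 2))
            = cs.wordProd (alternatingWord i j (T' + 1)) * cs.simple i := by
          rw [alternatingWord_succ, wordProd_concat]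
        have hup : cs.length (w * cs.simple i) = cs.length w + 1 :=
          cs.not_isRightDescent_iff.mp hdes
        have hle : cs.length (w * cs.simple i) ≤ cs.length v
            + cs.length (cs.wordProd (alternatingWord i j (T' + 1)) * cs.simple i) := by
          rw [hwv, mul_assoc]; exact cs.length_mul_le _ _
        have hub := cs.length_wordProd_le (alternatingWord j i (T' + 2))
        rw [length_alternatingWord] at hub
        by_contra hlt
        push_neg at hlt
        have hnr : ¬ cs.IsReduced (alternatingWord j i (T' + 2)) := by
          apply cs.not_isReduced_alternatingWord j i
          · rw [M.symmetric j i]; exact h0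
          · rw [M.symmetric j i]; omega
        apply hnr
        show cs.length (cs.wordProd (alternatingWord j i (T' + 2)))
          = (alternatingWord j i (T' + 2)).length
        rw [length_alternatingWord, hco]
        rw [hco] at hub
        omega
      have hnn := xs_nonneg (M := M) hij (T' + 1) hci
      have hvec := dvec (cs := cs) (ρ := ρ) hgeom hij (T' + 1)
      have hvi : 0 ≤ ρ v (sroot i) := ihn v (by omega) i hdvij.1
      have hvj : 0 ≤ ρ v (sroot j) := ihn v (by omega) j hdvij.2
      rw [hwv, map_mul, Module.End.mul_apply, hvec, map_add, map_smul, map_smul]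
      intro k
      have h1 := hvi k
      have h2 := hvj k
      simp only [Pi.add_apply, Pi.smul_apply, smul_eq_mul, Pi.zero_apply] at h1 h2 ⊢
      exact add_nonneg (mul_nonneg hnn.1 h1) (mul_nonneg hnn.2 h2)

lemma rho_simple_sroot (hgeom : IsGeometric cs ρ B) (i : I) :
    ρ (cs.simple i) (sroot i) = - sroot i := by
  rw [hgeom.simple_apply, B_self hgeom]
  module

lemma rho_inv_apply (w : W) (v : I → ℝ) : ρ w⁻¹ (ρ w v) = v := by
  rw [← Module.End.mul_apply, ← map_mul, inv_mul_cancel, map_one, Module.End.one_apply]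

lemma mem_Phi_smul (w : W) {γ : I → ℝ} (h : γ ∈ Phi ρ) : ρ w γ ∈ Phi ρ := by
  obtain ⟨w', i, rfl⟩ := h
  exact ⟨w * w', i, by rw [map_mul, Module.End.mul_apply]⟩

lemma B_root_self (hgeom : IsGeometric cs ρ B) {γ : I → ℝ} (h : γ ∈ Phi ρ) : B γ γ = 1 := by
  obtain ⟨w, i, rfl⟩ := h
  rw [B_inv hgeom, B_self hgeom]

theorem root_dichotomy (hgeom : IsGeometric cs ρ B) {γ : I → ℝ} (hγ : γ ∈ Phi ρ) :
    0 ≤ γ ∨ γ ≤ 0 := by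
  obtain ⟨w, i, rfl⟩ := hγ
  by_cases hd : cs.IsRightDescent w i
  · right
    have hnd : ¬ cs.IsRightDescent (w * cs.simple i) i :=
      (cs.isRightDescent_iff_not_isRightDescent_mul).mp hd
    have h := rho_simple_nonneg hgeom (w * cs.simple i) i hnd
    have key : ρ w (sroot i) = - ρ (w * cs.simple i) (sroot i) := by
      have h2 : ρ (w * cs.simple i) (sroot i) = ρ w (ρ (cs.simple i) (sroot i)) := by
        rw [map_mul, Module.End.mul_apply]
      rw [h2, rho_simple_sroot hgeom, map_neg, neg_neg]
    rw [key]
    exact neg_nonpos.mpr h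
  · left
    exact rho_simple_nonneg hgeom w i hd

theorem eq_sroot_of_simple_neg (hgeom : IsGeometric cs ρ B) {γ : I → ℝ} (hγ : γ ∈ Phi ρ)
    (hpos : 0 ≤ γ) (i : I) (hneg : ¬ 0 ≤ ρ (cs.simple i) γ) : γ = sroot i := by
  set δ := ρ (cs.simple i) γ with hδ
  have hδPhi : δ ∈ Phi ρ := mem_Phi_smul _ hγ
  have hδle : δ ≤ 0 := (root_dichotomy hgeom hδPhi).resolve_left hneg
  clear hneg
  have hcoord : ∀ k, k ≠ i → δ k = γ k := by
    intro k hk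
    rw [hδ, hgeom.simple_apply]
    simp [sroot, Pi.single_apply, hk]
  have hγzero : ∀ k, k ≠ i → γ k = 0 := by
    intro k hk
    have h1 := hδle k
    have h2 := hpos k
    rw [hcoord k hk] at h1
    simp only [Pi.zero_apply] at h1 h2
    linarith
  have hδzero : ∀ k, k ≠ i → δ k = 0 := fun k hk => (hcoord k hk).trans (hγzero k hk)
  have hδform : δ = δ i • sroot i := by
    funext k
    by_cases hk : k = i
    · subst hk; simp [sroot, Pi.single_apply]
    · rw [hδzero k hk]; simp [sroot, Pi.single_apply, hk]
  have hB1 : B δ δ = 1 := B_root_self hgeom hδPhi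
  rw [hδform] at hB1
  simp only [map_smul, LinearMap.smul_apply, smul_eq_mul] at hB1
  rw [B_self hgeom] at hB1
  have hδi : δ i = -1 := by
    have hle := hδle i
    simp only [Pi.zero_apply] at hle
    nlinarith
  have hrec : γ = ρ (cs.simple i) δ := by
    rw [hδ, ← Module.End.mul_apply, ← map_mul, cs.simple_mul_simple_self, map_one,
      Module.End.one_apply]
  rw [hrec, hδform, hδi, map_smul, rho_simple_sroot hgeom]
  rw [smul_neg, neg_smul, one_smul, neg_neg]

end BKAux

open BKAux


/-- Each toggle `τᵢ` restricts to an involution of `𝓛`. -/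
theorem toggle_involution_on_convex
    {I : Type*} [Fintype I] [DecidableEq I] {M : CoxeterMatrix I} {W : Type*} [Group W]
    (cs : CoxeterSystem M W) (ρ : Representation ℝ W (I → ℝ))
    (B : LinearMap.BilinForm ℝ (I → ℝ)) (hgeom : IsGeometric cs ρ B)
    (L : Set W) (hL : L.Nonempty) (hconv : IsConvex ρ L) (i : I) :
    ∀ u ∈ L, toggle ρ cs L i u ∈ L ∧ toggle ρ cs L i (toggle ρ cs L i u) = u := by
  classical
  intro u hu
  by_cases hmem : ρ u⁻¹ (sroot i) ∈ RL ρ L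
  · have h1 : toggle ρ cs L i u = u := by
      simp only [toggle]
      rw [if_pos hmem]
    exact ⟨by rw [h1]; exact hu, by rw [h1, h1]⟩
  · have h1 : toggle ρ cs L i u = cs.simple i * u := by
      simp only [toggle]
      rw [if_neg hmem]
    have hsmem : cs.simple i * u ∈ L := by
      apply hconv
      intro β hβ
      have huβ : (0 : I → ℝ) ≤ ρ u β := hβ.2 u hu
      have hγPhi : ρ u β ∈ Phi ρ := mem_Phi_smul u hβ.1
      show (0 : I → ℝ) ≤ ρ (cs.simple i * u) β
      rw [map_mul, Module.End.mul_apply]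
      by_contra hneg
      have hkey : ρ u β = sroot i := eq_sroot_of_simple_neg hgeom hγPhi huβ i hneg
      apply hmem
      have hβeq : ρ u⁻¹ (sroot i) = β := by rw [← hkey, rho_inv_apply]
      rw [hβeq]
      exact hβ
    refine ⟨by rw [h1]; exact hsmem, ?_⟩
    rw [h1]
    have hnot : ρ (cs.simple i * u)⁻¹ (sroot i) ∉ RL ρ L := by
      intro hc
      have h5 : (0 : I → ℝ) ≤ ρ u (ρ (cs.simple i * u)⁻¹ (sroot i)) := hc.2 u hu
      have hval : ρ u (ρ (cs.simple i * u)⁻¹ (sroot i)) = - sroot i := by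
        rw [← Module.End.mul_apply, ← map_mul]
        have huu : u * (cs.simple i * u)⁻¹ = cs.simple i := by
          rw [mul_inv_rev, cs.inv_simple, ← mul_assoc, mul_inv_cancel, one_mul]
        rw [huu, rho_simple_sroot hgeom]
      rw [hval] at h5
      have h6 := h5 i
      simp [sroot] at h6
      linarith
    simp only [toggle]
    rw [if_neg hnot, cs.simple_mul_simple_cancel_left]
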